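/- Let $\phi_{HF+}(\mathbf{z}) = \frac{1}{\sqrt{r}}\exp(-\|\mathbf{z}\|^2/2)\,\prod_{i=1}^{r/2}\left(\exp(\omega_i^\top\mathbf{z}), \exp(-\omega_i^\top\mathbf{z})\right)$ (concatenation), with i.i.d. $\omega_i \sim \mathcal{N}(0, I_N)$ and $r$ even. Then $\mathbb{E}[\phi_{HF+}(\mathbf{x})^\top \phi_{HF+}(\mathbf{y})] = \exp(\mathbf{x}^\top \mathbf{y})$ for all $\mathbf{x}, \mathbf{y} \in \mathbb{R}^N$. -/

import Mathlib

open MeasureTheory ProbabilityTheory Real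
open scoped NNReal

/-!
The summand indexed by `(i, ±)` depends only on the sample `ωᵢ ~ 𝒩(0, I)`, and equals
`(2m)⁻¹ exp (-‖x‖²/2 - ‖y‖²/2) exp (ωᵢᵀ(±(x + y)))`. By the Gaussian moment generating function
its mean is `(2m)⁻¹ exp (-‖x‖²/2 - ‖y‖²/2 + ‖x + y‖²/2) = (2m)⁻¹ exp (xᵀy)` for either sign, and
the `2m` summands add up to `exp (xᵀy)`.
-/

section GaussianVector

variable {ι : Type*} [Fintype ι]

lemma integral_exp_sum_mul_pi_gaussianReal (μ : ℝ) (v : ℝ≥0) (a : ι → ℝ) :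
    ∫ ω : ι → ℝ, exp (∑ j, ω j * a j) ∂(Measure.pi fun _ => gaussianReal μ v) =
      exp (∑ j, (μ * a j + v * a j ^ 2 / 2)) := by
  simp_rw [exp_sum]
  rw [integral_fintype_prod_eq_prod (𝕜 := ℝ) fun j t => exp (t * a j)]
  refine Finset.prod_congr rfl fun j _ => ?_
  calc ∫ t, exp (t * a j) ∂gaussianReal μ v = mgf id (gaussianReal μ v) (a j) := by
        simp only [mgf, id, mul_comm]
    _ = _ := congrFun mgf_id_gaussianReal (a j)

lemma integrable_exp_sum_mul_pi_gaussianReal (μ : ℝ) (v : ℝ≥0) (a : ι → ℝ) :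
    Integrable (fun ω : ι → ℝ => exp (∑ j, ω j * a j)) (Measure.pi fun _ => gaussianReal μ v) := by
  simp_rw [exp_sum, mul_comm _ (a _)]
  exact Integrable.fintype_prod fun j => integrable_exp_mul_gaussianReal (a j)

lemma exp_mul_sum_mul_exp_mul_sum (s : ℝ) (ω x y : ι → ℝ) :
    exp (s * ∑ j, ω j * x j) * exp (s * ∑ j, ω j * y j) =
      exp (∑ j, ω j * (s * (x j + y j))) := by
  rw [← exp_add, Finset.mul_sum, Finset.mul_sum, ← Finset.sum_add_distrib]
  congr 1
  exact Finset.sum_congr rfl fun j _ => by ring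

lemma integral_exp_mul_sum_mul_exp_mul_sum {s : ℝ} (hs : s ^ 2 = 1) (x y : ι → ℝ) :
    ∫ ω : ι → ℝ, exp (s * ∑ j, ω j * x j) * exp (s * ∑ j, ω j * y j)
        ∂(Measure.pi fun _ => gaussianReal 0 1) =
      exp ((∑ j, x j ^ 2) / 2 + (∑ j, y j ^ 2) / 2 + ∑ j, x j * y j) := by
  simp_rw [exp_mul_sum_mul_exp_mul_sum, integral_exp_sum_mul_pi_gaussianReal, NNReal.coe_one,
    Finset.sum_div, ← Finset.sum_add_distrib]
  congr 1
  refine Finset.sum_congr rfl fun j _ => ?_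
  linear_combination (x j + y j) ^ 2 / 2 * hs

lemma integrable_positiveFeature_mul (c s : ℝ) (x y : ι → ℝ) :
    Integrable (fun ω : ι → ℝ =>
        (c * exp (-(∑ j, x j ^ 2) / 2) * exp (s * ∑ j, ω j * x j)) *
          (c * exp (-(∑ j, y j ^ 2) / 2) * exp (s * ∑ j, ω j * y j)))
      (Measure.pi fun _ => gaussianReal 0 1) := by
  have hprod : ∀ ω : ι → ℝ,
      (c * exp (-(∑ j, x j ^ 2) / 2) * exp (s * ∑ j, ω j * x j)) *
          (c * exp (-(∑ j, y j ^ 2) / 2) * exp (s * ∑ j, ω j * y j)) =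
        c * exp (-(∑ j, x j ^ 2) / 2) * (c * exp (-(∑ j, y j ^ 2) / 2)) *
          exp (∑ j, ω j * (s * (x j + y j))) := fun ω => by
    rw [← exp_mul_sum_mul_exp_mul_sum]
    ring
  simp_rw [hprod]
  exact (integrable_exp_sum_mul_pi_gaussianReal 0 1 _).const_mul _

lemma integral_positiveFeature_mul (c : ℝ) {s : ℝ} (hs : s ^ 2 = 1) (x y : ι → ℝ) :
    ∫ ω : ι → ℝ,
        (c * exp (-(∑ j, x j ^ 2) / 2) * exp (s * ∑ j, ω j * x j)) *
          (c * exp (-(∑ j, y j ^ 2) / 2) * exp (s * ∑ j, ω j * y j))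
        ∂(Measure.pi fun _ => gaussianReal 0 1) =
      c ^ 2 * exp (∑ j, x j * y j) := by
  have hprod : ∀ ω : ι → ℝ,
      (c * exp (-(∑ j, x j ^ 2) / 2) * exp (s * ∑ j, ω j * x j)) *
          (c * exp (-(∑ j, y j ^ 2) / 2) * exp (s * ∑ j, ω j * y j)) =
        c ^ 2 * exp (-(∑ j, x j ^ 2) / 2 + -(∑ j, y j ^ 2) / 2) *
          (exp (s * ∑ j, ω j * x j) * exp (s * ∑ j, ω j * y j)) := fun ω => by
    rw [exp_add]
    ring
  simp_rw [hprod]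
  rw [integral_const_mul, integral_exp_mul_sum_mul_exp_mul_sum hs, mul_assoc, ← exp_add]
  ring_nf

end GaussianVector

/-- The hyperbolic cosine random feature map (FAVOR+ with the antithetic trick):
with `r = 2m` features, `φ(z)` has, for each Gaussian sample `ωᵢ` (`i < m`), the two
coordinates `(1/√(2m)) exp(-‖z‖²/2) exp(±ωᵢᵀz)`. It is an unbiased estimator of the
softmax kernel: `E[φ(x)ᵀφ(y)] = exp(xᵀy)`. -/
theorem hyperbolic_favorPlus_unbiased (N m : ℕ) (hm : 0 < m) (x y : Fin N → ℝ) :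
    ∫ ω : Fin m → Fin N → ℝ,
        ∑ p : Fin m × Bool,
          (1 / Real.sqrt (2 * m) * Real.exp (-(∑ j, x j ^ 2) / 2) *
            Real.exp ((if p.2 then (1 : ℝ) else -1) * ∑ j, ω p.1 j * x j)) *
          (1 / Real.sqrt (2 * m) * Real.exp (-(∑ j, y j ^ 2) / 2) *
            Real.exp ((if p.2 then (1 : ℝ) else -1) * ∑ j, ω p.1 j * y j))
        ∂(Measure.pi fun _ : Fin m => Measure.pi fun _ : Fin N => gaussianReal 0 1) =
      Real.exp (∑ j, x j * y j) := by
  have hsign (b : Bool) : (if b then (1 : ℝ) else -1) ^ 2 = 1 := by cases b <;> norm_num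
  have hm' : (0 : ℝ) < 2 * m := by positivity
  set γ : Measure (Fin N → ℝ) := Measure.pi fun _ => gaussianReal 0 1
  have hint (p : Fin m × Bool) := integrable_comp_eval (μ := fun _ : Fin m => γ) (i := p.1)
    (integrable_positiveFeature_mul (1 / √(2 * m)) (if p.2 then (1 : ℝ) else -1) x y)
  have hmean (p : Fin m × Bool) := (integral_comp_eval (μ := fun _ : Fin m => γ) (i := p.1)
    (integrable_positiveFeature_mul _ _ x y).aestronglyMeasurable).trans
      (integral_positiveFeature_mul (1 / √(2 * m)) (hsign p.2) x y)
  rw [integral_finsetSum _ fun p _ => hint p, Finset.sum_congr rfl fun p _ => hmean p,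
    Finset.sum_const, Finset.card_univ, Fintype.card_prod, Fintype.card_fin, Fintype.card_bool, nsmul_eq_mul, div_pow, one_pow,
    sq_sqrt hm'.le]
  push_cast
  field_simp
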